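/- Let G ⊂ ℝⁿ be a convex body, let u ∈ 𝕊ⁿ⁻¹ be a unit vector, and let t > 0 satisfy t < h_G(u) − min_{x ∈ G} ⟨u, x⟩. Define C_t := C_G(u,t) and S_t := G ∩ {x ∈ ℝⁿ : ⟨u, x⟩ = h_G(u) − t}. Then Vol(G + C_t) − Vol(G + S_t) ≤ 2ⁿ · Vol(C_t). -/
import Mathlib


open MeasureTheory Metric Pointwise
open scoped RealInnerProductSpace

/-- Support function `h_G(u) = sup_{x ∈ G} ⟪u, x⟫`. -/
noncomputable def suppFn {n : ℕ} (G : Set (EuclideanSpace ℝ (Fin n)))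
    (u : EuclideanSpace ℝ (Fin n)) : ℝ :=
  sSup ((fun x => ⟪u, x⟫) '' G)

/-- `min_{x ∈ G} ⟪u, x⟫`. -/
noncomputable def infFn {n : ℕ} (G : Set (EuclideanSpace ℝ (Fin n)))
    (u : EuclideanSpace ℝ (Fin n)) : ℝ :=
  sInf ((fun x => ⟪u, x⟫) '' G)

/-- The cap of `G` in direction `u` with height `h`:
`C_G(u,h) = {x ∈ G : ⟪u, x⟫ ≥ h_G(u) − h}`. -/
noncomputable def capG {n : ℕ} (G : Set (EuclideanSpace ℝ (Fin n)))
    (u : EuclideanSpace ℝ (Fin n)) (h : ℝ) : Set (EuclideanSpace ℝ (Fin n)) :=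
  {x ∈ G | suppFn G u - h ≤ ⟪u, x⟫}
theorem stmt13 {n : ℕ} (G : Set (EuclideanSpace ℝ (Fin n)))
    (hGcv : Convex ℝ G) (hGcp : IsCompact G) (hGint : (interior G).Nonempty)
    (u : EuclideanSpace ℝ (Fin n)) (hu : ‖u‖ = 1)
    (t : ℝ) (ht : 0 < t) (ht' : t < suppFn G u - infFn G u) :
    (volume (G + capG G u t)).toReal -
        (volume (G + (G ∩ {x : EuclideanSpace ℝ (Fin n) | ⟪u, x⟫ = suppFn G u - t}))).toReal ≤
      2 ^ n * (volume (capG G u t)).toReal := by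
  set h := suppFn G u with hh
  set C := capG G u t with hC
  set S := G ∩ {x : EuclideanSpace ℝ (Fin n) | ⟪u, x⟫ = h - t} with hS
  -- continuity of x ↦ ⟪u, x⟫
  have hcont : Continuous fun x : EuclideanSpace ℝ (Fin n) => ⟪u, x⟫ :=
    continuous_const.inner continuous_id
  -- C is compact
  have hCclosed : IsClosed {x : EuclideanSpace ℝ (Fin n) | h - t ≤ ⟪u, x⟫} :=
    isClosed_le continuous_const hcont
  have hCcp : IsCompact C := hGcp.inter_right hCclosed
  have hScp : IsCompact S := hGcp.inter_right (isClosed_eq hcont continuous_const)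
  -- convexity of C
  have hlin : IsLinearMap ℝ fun x : EuclideanSpace ℝ (Fin n) => ⟪u, x⟫ :=
    ⟨fun a b => inner_add_right u a b, fun c a => real_inner_smul_right u a c⟩
  have hCcv : Convex ℝ C := hGcv.inter (convex_halfSpace_ge hlin (h - t))
  -- key inclusion
  have hincl : G + C ⊆ (G + S) ∪ ((2 : ℝ) • C) := by
    rintro z hz
    rw [Set.mem_add] at hz
    obtain ⟨g, hg, c, hc, rfl⟩ := hz
    have hcG : c ∈ G := hc.1
    have hcineq : h - t ≤ ⟪u, c⟫ := by rw [hh]; exact hc.2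
    by_cases hg' : h - t ≤ ⟪u, g⟫
    · right
      have hmem : g + c ∈ C + C := Set.add_mem_add ⟨hg, hg'⟩ hc
      have h2 : (2 : ℝ) • C = C + C := by
        have h12 : ((1 : ℝ) + 1) • C = (1 : ℝ) • C + (1 : ℝ) • C :=
          hCcv.add_smul zero_le_one zero_le_one
        norm_num [one_smul] at h12
        rw [h12]
      rw [h2]; exact hmem
    · left
      push_neg at hg'
      have hdpos : (0 : ℝ) < ⟪u, c⟫ - ⟪u, g⟫ := by linarith
      set lam : ℝ := (h - t - ⟪u, g⟫) / (⟪u, c⟫ - ⟪u, g⟫) with hlam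
      have hlam0 : 0 ≤ lam := div_nonneg (by linarith) hdpos.le
      have hlam1 : lam ≤ 1 := by
        rw [hlam, div_le_one hdpos]; linarith
      set s := (1 - lam) • g + lam • c with hs'
      have hsG : s ∈ G := hGcv hg hcG (by linarith) hlam0 (by ring)
      have hsinner : ⟪u, s⟫ = h - t := by
        have hexp : ⟪u, s⟫ = (1 - lam) * ⟪u, g⟫ + lam * ⟪u, c⟫ := by
          rw [hs', hlin.map_add, hlin.map_smul, hlin.map_smul]
          simp
        have hlamd : lam * (⟪u, c⟫ - ⟪u, g⟫) = h - t - ⟪u, g⟫ := by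
          rw [hlam]; exact div_mul_cancel₀ _ hdpos.ne'
        rw [hexp]; nlinarith [hlamd]
      have hrest : g + c - s ∈ G := by
        have heq : g + c - s = lam • g + (1 - lam) • c := by
          rw [hs']; module
        rw [heq]
        exact hGcv hg hcG hlam0 (by linarith) (by ring)
      rw [Set.mem_add]
      exact ⟨g + c - s, hrest, s, ⟨hsG, hsinner⟩, by abel⟩
  -- volume computation for 2 • C
  have hvol2 : volume ((2 : ℝ) • C) = ENNReal.ofReal (2 ^ n) * volume C := by
    rw [Measure.addHaar_smul]
    congr 1
    rw [finrank_euclideanSpace_fin]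
    rw [abs_of_nonneg (by positivity)]
  -- finiteness
  have hfin2 : volume (G + S) < ⊤ := (hGcp.add hScp).measure_lt_top
  have hfinC : volume C < ⊤ := hCcp.measure_lt_top
  -- main inequality in ENNReal
  have hmain : volume (G + C) ≤ volume (G + S) + ENNReal.ofReal (2 ^ n) * volume C := by
    calc volume (G + C) ≤ volume ((G + S) ∪ ((2 : ℝ) • C)) := measure_mono hincl
      _ ≤ volume (G + S) + volume ((2 : ℝ) • C) := measure_union_le _ _
      _ = volume (G + S) + ENNReal.ofReal (2 ^ n) * volume C := by rw [hvol2]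
  have hRHSfin : volume (G + S) + ENNReal.ofReal (2 ^ n) * volume C < ⊤ :=
    ENNReal.add_lt_top.mpr ⟨hfin2, ENNReal.mul_lt_top ENNReal.ofReal_lt_top hfinC⟩
  have hfinal := ENNReal.toReal_mono hRHSfin.ne hmain
  rw [ENNReal.toReal_add hfin2.ne (ENNReal.mul_lt_top ENNReal.ofReal_lt_top hfinC).ne,
    ENNReal.toReal_mul, ENNReal.toReal_ofReal (by positivity)] at hfinal
  linarith
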